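/- arXiv:math/0511163 — 4 statements merged into one kernel-verified Lean document; each statement's English description precedes it below -/
import Mathlib

section
/- Let 𝔤 and V be finite-dimensional vector spaces over the finite field F_q, let ϱ : 𝔤 → End(V) be an F_q-linear map, let Ψ : F_q → ℂ^× be a nontrivial additive character, and let ξ ∈ 𝔤^*. Define the moment map μ : V × V^* → 𝔤^* by ⟨μ(v,w), X⟩ = w(ϱ(X)v) for all X ∈ 𝔤. Then the number of pairs (v,w) ∈ V × V^* satisfying μ(v,w) = ξ equals |𝔤|^{-1} · |V| · Σ_{X ∈ 𝔤} |ker ϱ(X)| · Ψ(⟨X,ξ⟩), as an equality of complex numbers. -/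
open Finset
open scoped Classical

-- orthogonality: sum of ψ (a X) over X : M
lemma sum_psi_dual {F : Type*} [Field F] [Fintype F]
    {M : Type*} [AddCommGroup M] [Module F M] [Fintype M]
    (ψ : AddChar F ℂ) (hψ : ψ ≠ 1) (a : Module.Dual F M) :
    ∑ X : M, ψ (a X) = if a = 0 then (Fintype.card M : ℂ) else 0 := by
  classical
  by_cases h : a = 0
  · subst h; simp
  · rw [if_neg h]
    have χ : AddChar M ℂ := ψ.compAddMonoidHom a.toAddMonoidHom
    have : ∑ X : M, ψ (a X) = ∑ X : M, (ψ.compAddMonoidHom a.toAddMonoidHom) X := rfl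
    rw [this]
    apply AddChar.sum_eq_zero_of_ne_one
    obtain ⟨c, hc⟩ := AddChar.ne_one_iff.mp hψ
    obtain ⟨X0, hX0⟩ : ∃ X0, a X0 ≠ 0 := by
      by_contra hcon
      push_neg at hcon
      exact h (LinearMap.ext fun x => hcon x)
    rw [AddChar.ne_one_iff]
    refine ⟨(c * (a X0)⁻¹) • X0, ?_⟩
    have : a ((c * (a X0)⁻¹) • X0) = c := by
      rw [map_smul]
      field_simp
      rw [smul_eq_mul, div_mul_cancel₀ _ hX0]
    simpa [AddChar.compAddMonoidHom, this] using hc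

noncomputable instance {F : Type*} [Field F] [Fintype F]
    {V : Type*} [AddCommGroup V] [Module F V] [Fintype V] :
    Fintype (Module.Dual F V) :=
  haveI : Finite (Module.Dual F V) := Finite.of_injective _ DFunLike.coe_injective
  Fintype.ofFinite _

lemma card_dual_eq {F : Type*} [Field F] [Fintype F]
    {V : Type*} [AddCommGroup V] [Module F V] [Fintype V] :
    Fintype.card (Module.Dual F V) = Fintype.card V := by
  rw [Module.card_eq_pow_finrank (K := F) (V := Module.Dual F V),
      Module.card_eq_pow_finrank (K := F) (V := V), Subspace.dual_finrank_eq]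

lemma sum_psi_eval {F : Type*} [Field F] [Fintype F]
    {V : Type*} [AddCommGroup V] [Module F V] [Fintype V]
    (ψ : AddChar F ℂ) (hψ : ψ ≠ 1) (u : V) :
    ∑ w : Module.Dual F V, ψ (w u) = if u = 0 then (Fintype.card V : ℂ) else 0 := by
  have key : (Module.Dual.eval F V u = 0) ↔ u = 0 := by
    rw [LinearMap.ext_iff]
    simp only [Module.Dual.eval_apply, LinearMap.zero_apply]
    exact Module.forall_dual_apply_eq_zero_iff F u
  have := sum_psi_dual (M := Module.Dual F V) ψ hψ (Module.Dual.eval F V u)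
  simp only [Module.Dual.eval_apply] at this
  rw [this, card_dual_eq]
  simp only [key]

lemma ker_neg_eq {R M N : Type*} [Ring R] [AddCommGroup M] [AddCommGroup N]
    [Module R M] [Module R N] (f : M →ₗ[R] N) :
    LinearMap.ker (-f) = LinearMap.ker f := by
  ext x; simp [LinearMap.mem_ker]

/-- Let `𝔤` and `V` be finite-dimensional vector spaces over the finite
field `F = F_q`, let `ϱ : 𝔤 → End(V)` be an `F`-linear map, let `ψ` be a nontrivial
additive character of `F` and let `ξ ∈ 𝔤^*`.  The moment map `μ : V × V^* → 𝔤^*` is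
defined by `⟨μ(v,w), X⟩ = w(ϱ(X)v)`.  Then the number of pairs `(v,w) ∈ V × V^*` with
`μ(v,w) = ξ` equals `|𝔤|⁻¹ ⬝ |V| ⬝ ∑_{X ∈ 𝔤} |ker ϱ(X)| ⬝ ψ(⟨X, ξ⟩)`. -/
theorem card_moment_map_fiber_eq_fourier
    (F : Type*) [Field F] [Fintype F]
    (g : Type*) [AddCommGroup g] [Module F g] [Fintype g]
    (V : Type*) [AddCommGroup V] [Module F V] [Fintype V]
    (ϱ : g →ₗ[F] (V →ₗ[F] V))
    (ψ : AddChar F ℂ) (hψ : ψ ≠ 1)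
    (ξ : Module.Dual F g) :
    (Nat.card {p : V × Module.Dual F V // ∀ X : g, p.2 (ϱ X p.1) = ξ X} : ℂ) =
      (Fintype.card g : ℂ)⁻¹ * (Fintype.card V : ℂ) *
        ∑ X : g, (Nat.card (LinearMap.ker (ϱ X)) : ℂ) * ψ (ξ X) := by
  classical
  set μ : V × Module.Dual F V → Module.Dual F g := fun p =>
    { toFun := fun X => p.2 (ϱ X p.1)
      map_add' := fun X Y => by simp
      map_smul' := fun c X => by simp } with hμ
  have hμapp : ∀ p X, μ p X = p.2 (ϱ X p.1) := fun p X => rfl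
  have hiff : ∀ p : V × Module.Dual F V,
      (∀ X : g, p.2 (ϱ X p.1) = ξ X) ↔ μ p - ξ = 0 := by
    intro p
    rw [sub_eq_zero, LinearMap.ext_iff]
    exact Iff.rfl
  -- step 1: count via indicator
  have hcard : (Nat.card {p : V × Module.Dual F V // ∀ X : g, p.2 (ϱ X p.1) = ξ X} : ℂ)
      = ∑ p : V × Module.Dual F V, if μ p - ξ = 0 then (1 : ℂ) else 0 := by
    rw [Nat.card_eq_fintype_card, Fintype.card_subtype]
    rw [← Finset.sum_boole]
    exact Finset.sum_congr rfl fun p _ => by simp [hiff p]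
  -- step 2: indicator via characters
  have hgne : (Fintype.card g : ℂ) ≠ 0 := by
    exact_mod_cast Fintype.card_ne_zero
  have hstep2 : ∀ p : V × Module.Dual F V,
      (if μ p - ξ = 0 then (1 : ℂ) else 0)
        = (Fintype.card g : ℂ)⁻¹ * ∑ X : g, ψ ((μ p - ξ) X) := by
    intro p
    rw [sum_psi_dual ψ hψ (μ p - ξ)]
    by_cases h : μ p - ξ = 0
    · rw [if_pos h, if_pos h, inv_mul_cancel₀ hgne]
    · rw [if_neg h, if_neg h, mul_zero]
  -- kernel counting
  have hker : ∀ X : g,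
      (∑ v : V, if ϱ X v = 0 then (1 : ℂ) else 0)
        = (Nat.card (LinearMap.ker (ϱ X)) : ℂ) := by
    intro X
    rw [Finset.sum_boole]
    have h1 : Nat.card (LinearMap.ker (ϱ X)) = Nat.card {v : V // ϱ X v = 0} :=
      Nat.card_congr (Equiv.subtypeEquivRight (fun v => LinearMap.mem_ker))
    rw [h1, Nat.card_eq_fintype_card, Fintype.card_subtype]
  -- inner sum over p for fixed X
  have hinner : ∀ X : g,
      (∑ p : V × Module.Dual F V, ψ ((μ p - ξ) X))
        = (Fintype.card V : ℂ) * (Nat.card (LinearMap.ker (ϱ X)) : ℂ) * ψ (-ξ X) := by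
    intro X
    have : ∀ p : V × Module.Dual F V, ψ ((μ p - ξ) X) = ψ (p.2 (ϱ X p.1)) * ψ (-ξ X) := by
      intro p
      rw [LinearMap.sub_apply, hμapp, sub_eq_add_neg, AddChar.map_add_eq_mul]
    simp only [this]
    rw [← Finset.sum_mul, Fintype.sum_prod_type]
    congr 1
    calc ∑ v : V, ∑ w : Module.Dual F V, ψ (w (ϱ X v))
        = ∑ v : V, if ϱ X v = 0 then (Fintype.card V : ℂ) else 0 := by
          exact Finset.sum_congr rfl fun v _ => sum_psi_eval ψ hψ (ϱ X v)
      _ = (Fintype.card V : ℂ) * ∑ v : V, if ϱ X v = 0 then (1 : ℂ) else 0 := by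
          rw [Finset.mul_sum]
          exact Finset.sum_congr rfl fun v _ => by split <;> simp
      _ = (Fintype.card V : ℂ) * (Nat.card (LinearMap.ker (ϱ X)) : ℂ) := by rw [hker X]
  -- assemble
  rw [hcard]
  simp only [hstep2]
  rw [← Finset.mul_sum, Finset.sum_comm]
  simp only [hinner]
  rw [mul_assoc]
  congr 1
  rw [Finset.mul_sum]
  -- reindex X ↦ -X
  refine Fintype.sum_equiv (Equiv.neg g) _ _ fun X => ?_
  simp only [Equiv.neg_apply, map_neg, ker_neg_eq, neg_neg]
  ring
end

section
/- Let a_1, …, a_n ∈ F_q^d, let Ψ : F_q → ℂ^× be a nontrivial additive character, and let ξ ∈ F_q^d. Then the number of pairs (v, w) ∈ F_q^n × F_q^n satisfying Σ_{i=1}^n v_i w_i a_i = ξ equals q^{n−d} Σ_{X ∈ F_q^d} q^{ca(X)} Ψ(X · ξ), where ca(X) = #{ i ∈ {1,…,n} : X · a_i = 0 } and X · Y denotes the standard bilinear pairing Σ_{j=1}^d X_j Y_j on F_q^d. (This is an equality of complex numbers.) -/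
open scoped BigOperators

private lemma addChar_map_sum {A M : Type*} [AddCommMonoid A] [CommMonoid M]
    (ψ : AddChar A M) {ι : Type*} (s : Finset ι) (f : ι → A) :
    ψ (∑ i ∈ s, f i) = ∏ i ∈ s, ψ (f i) := by
  induction s using Finset.cons_induction with
  | empty => simp
  | cons a s ha ih => rw [Finset.sum_cons, Finset.prod_cons, AddChar.map_add_eq_mul, ih]

/-- Let `a_1, …, a_n ∈ F_q^d`, let `ψ` be a nontrivial additive character
of `F_q`, and let `ξ ∈ F_q^d`.  Then the number of pairs `(v, w) ∈ F_q^n × F_q^n` with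
`∑ i, v_i w_i a_i = ξ` equals `q^{n-d} ∑_{X ∈ F_q^d} q^{ca(X)} ψ(X ⬝ ξ)`, where
`ca(X) = #{i : X ⬝ a_i = 0}`. -/
theorem card_toric_moment_fiber_eq_fourier
    (F : Type*) [Field F] [Fintype F] [DecidableEq F]
    (d n : ℕ) (a : Fin n → Fin d → F)
    (ψ : AddChar F ℂ) (hψ : ψ ≠ 1) (ξ : Fin d → F) :
    (Nat.card {p : (Fin n → F) × (Fin n → F) //
        ∑ i : Fin n, (p.1 i * p.2 i) • a i = ξ} : ℂ) =
      (Fintype.card F : ℂ) ^ ((n : ℤ) - (d : ℤ)) *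
        ∑ X : Fin d → F,
          (Fintype.card F : ℂ) ^
              (Finset.univ.filter fun i : Fin n => ∑ j : Fin d, X j * a i j = 0).card *
            ψ (∑ j : Fin d, X j * ξ j) := by
  classical
  set q : ℕ := Fintype.card F with hqdef
  have hq : (q : ℂ) ≠ 0 := Nat.cast_ne_zero.mpr Fintype.card_ne_zero
  have hprim : ψ.IsPrimitive := AddChar.IsPrimitive.of_ne_one hψ
  -- one-variable orthogonality
  have horth : ∀ c : F, ∑ x : F, ψ (x * c) = if c = 0 then (q : ℂ) else 0 := by
    intro c
    simpa using AddChar.sum_mulShift c hprim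
  -- pair sum
  have hS : ∀ c : F, (∑ p : F × F, ψ (p.1 * p.2 * c)) =
      if c = 0 then (q : ℂ) * q else q := by
    intro c
    rw [Fintype.sum_prod_type]
    have h1 : ∀ v : F, ∑ w : F, ψ (v * w * c) = if v * c = 0 then (q : ℂ) else 0 := by
      intro v
      rw [← horth (v * c)]
      exact Finset.sum_congr rfl fun w _ => by ring_nf
    simp_rw [h1]
    by_cases hc : c = 0
    · simp [hc, Finset.sum_const, hqdef, mul_comm]
    · have h2 : ∀ v : F, v * c = 0 ↔ v = 0 := fun v => by
        simp [mul_eq_zero, hc]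
      simp_rw [h2]
      rw [if_neg hc, Finset.sum_ite_eq' Finset.univ (0 : F) (fun _ => (q : ℂ))]
      simp
  -- orthogonality over F^d
  have horthd : ∀ y : Fin d → F,
      ∑ X : Fin d → F, ψ (∑ j, X j * y j) = if y = 0 then (q : ℂ) ^ d else 0 := by
    intro y
    have h1 : ∀ X : Fin d → F, ψ (∑ j, X j * y j) = ∏ j, ψ (X j * y j) :=
      fun X => addChar_map_sum ψ _ _
    simp_rw [h1]
    rw [← Fintype.prod_sum (fun j (x : F) => ψ (x * y j))]
    by_cases hy : y = 0
    · subst hy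
      simp [horth, hqdef]
    · obtain ⟨j, hj⟩ := Function.ne_iff.mp hy
      rw [if_neg hy]
      refine Finset.prod_eq_zero (Finset.mem_univ j) ?_
      rw [horth, if_neg (by simpa using hj)]
  -- the counting function
  set f : (Fin n → F) × (Fin n → F) → (Fin d → F) :=
    fun p => ∑ i : Fin n, (p.1 i * p.2 i) • a i with hfdef
  have hcard : (Nat.card {p : (Fin n → F) × (Fin n → F) // f p = ξ} : ℂ) =
      ∑ p : (Fin n → F) × (Fin n → F), if f p = ξ then (1 : ℂ) else 0 := by
    rw [Nat.card_eq_fintype_card, Fintype.card_subtype, Finset.sum_boole]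
  -- inner sum for fixed X
  have hinner : ∀ X : Fin d → F,
      (∑ p : (Fin n → F) × (Fin n → F), ψ (-∑ j, X j * f p j)) =
        (q : ℂ) ^ n *
          (q : ℂ) ^ (Finset.univ.filter fun i : Fin n =>
            ∑ j : Fin d, X j * a i j = 0).card := by
    intro X
    set c : Fin n → F := fun i => ∑ j, X j * a i j with hcdef
    have hfx : ∀ p : (Fin n → F) × (Fin n → F),
        (∑ j, X j * f p j) = ∑ i, p.1 i * p.2 i * c i := by
      intro p
      simp only [hfdef, Finset.sum_apply, Pi.smul_apply, smul_eq_mul, Finset.mul_sum]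
      rw [Finset.sum_comm]
      refine Finset.sum_congr rfl fun i _ => ?_
      rw [hcdef, Finset.mul_sum]
      exact Finset.sum_congr rfl fun j _ => by ring
    have hneg : ∀ p : (Fin n → F) × (Fin n → F),
        ψ (-∑ j, X j * f p j) = ∏ i, ψ (p.1 i * p.2 i * (-c i)) := by
      intro p
      rw [hfx, ← addChar_map_sum]
      congr 1
      rw [← Finset.sum_neg_distrib]
      exact Finset.sum_congr rfl fun i _ => by ring
    simp_rw [hneg]
    have hequiv :
        (∑ p : (Fin n → F) × (Fin n → F), ∏ i, ψ (p.1 i * p.2 i * (-c i))) =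
        ∑ u : Fin n → F × F, ∏ i, ψ ((u i).1 * (u i).2 * (-c i)) := by
      apply Fintype.sum_equiv (Equiv.arrowProdEquivProdArrow (Fin n) (fun _ => F) (fun _ => F)).symm
      intro u
      rfl
    rw [hequiv, ← Fintype.prod_sum (fun i (x : F × F) => ψ (x.1 * x.2 * (-c i)))]
    have h3 : ∀ i : Fin n,
        (∑ x : F × F, ψ (x.1 * x.2 * (-c i))) =
          (q : ℂ) * (if c i = 0 then (q : ℂ) else 1) := by
      intro i
      rw [hS (-c i)]
      by_cases hci : c i = 0 <;> simp [hci]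
    simp_rw [h3]
    rw [Finset.prod_mul_distrib, Finset.prod_const, Finset.prod_ite,
      Finset.prod_const, Finset.prod_const, one_pow, mul_one]
    simp [hcdef]
  -- key identity
  have key : (q : ℂ) ^ d * (Nat.card {p : (Fin n → F) × (Fin n → F) // f p = ξ} : ℂ) =
      (q : ℂ) ^ n *
        ∑ X : Fin d → F,
          (q : ℂ) ^ (Finset.univ.filter fun i : Fin n =>
              ∑ j : Fin d, X j * a i j = 0).card *
            ψ (∑ j : Fin d, X j * ξ j) := by
    rw [hcard, Finset.mul_sum]
    have h4 : ∀ p : (Fin n → F) × (Fin n → F),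
        (q : ℂ) ^ d * (if f p = ξ then (1 : ℂ) else 0) =
          ∑ X : Fin d → F, ψ (∑ j, X j * (ξ j - f p j)) := by
      intro p
      rw [horthd]
      by_cases hp : f p = ξ
      · rw [if_pos hp, if_pos, mul_one]
        funext j; simp [hp]
      · rw [if_neg hp, if_neg, mul_zero]
        intro h0
        apply hp
        funext j
        have := congrFun h0 j
        simp only [Pi.zero_apply, sub_eq_zero] at this
        exact this.symm
    simp_rw [h4]
    rw [Finset.sum_comm]
    rw [Finset.mul_sum]
    refine Finset.sum_congr rfl fun X _ => ?_
    have h5 : ∀ p : (Fin n → F) × (Fin n → F),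
        ψ (∑ j, X j * (ξ j - f p j)) =
          ψ (∑ j, X j * ξ j) * ψ (-∑ j, X j * f p j) := by
      intro p
      rw [← AddChar.map_add_eq_mul]
      congr 1
      rw [← Finset.sum_neg_distrib, ← Finset.sum_add_distrib]
      exact Finset.sum_congr rfl fun j _ => by ring
    simp_rw [h5]
    rw [← Finset.mul_sum, hinner X]
    ring
  -- conclude
  have hpow : (q : ℂ) ^ ((n : ℤ) - (d : ℤ)) = (q : ℂ) ^ n / (q : ℂ) ^ d := by
    rw [zpow_sub₀ hq, zpow_natCast, zpow_natCast]
  rw [hpow, div_mul_eq_mul_div, eq_div_iff (pow_ne_zero d hq)]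
  linear_combination key
end

section
/- Let a_1, …, a_n be nonzero vectors spanning F_q^d, and for each i let H_i = { X ∈ F_q^d : X · a_i = 0 }, where X · Y = Σ_j X_j Y_j. Let L(A) be the intersection lattice: the set of all subspaces of F_q^d that arise as intersections of subfamilies of {H_1, …, H_n} (including the empty intersection F_q^d), partially ordered by inclusion; since the a_i span, its least element is {0}. Let Ψ : F_q → ℂ^× be a nontrivial additive character and let ξ ∈ F_q^d be generic, meaning that for every V ∈ L(A) with V ≠ {0} there exists X ∈ V with X · ξ ≠ 0. Then Σ_{X ∈ F_q^d} q^{ca(X)} Ψ(X · ξ) = Σ_{V ∈ L(A)} μ({0}, V) · q^{ca(V)}, where ca(X) = #{ i : X · a_i = 0 }, ca(V) = #{ i : V ⊆ H_i }, and μ is the Möbius function of the finite partially ordered set L(A). -/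
/-!
Write `V_X = ⋂_{X ∈ H_i} H_i` for the smallest flat containing `X`; then `ca(X) = ca(V_X)`, so
the left side is `∑_V q^{ca(V)} f(V)` with `f(V) = ∑_{V_X = V} Ψ(X · ξ)`. Summing `f` over the
flats `W ≤ V` gives the character sum of `X ↦ Ψ(X · ξ)` over `V`, which is `1` for `V = {0}` and
vanishes otherwise because `ξ` is generic. Hence `f` satisfies the recursion defining
`μ({0}, ·)`, and `f = m`.
-/

open Finset

theorem Finset.eqOn_of_sum_filter_le_eq {α β : Type*} [PartialOrder α] [AddCommGroup β]
    [DecidableLE α] {s : Finset α} {f g c : α → β}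
    (hf : ∀ v ∈ s, ∑ w ∈ s with w ≤ v, f w = c v)
    (hg : ∀ v ∈ s, ∑ w ∈ s with w ≤ v, g w = c v) :
    Set.EqOn f g s := by
  classical
  suffices ∀ v : s, f v = g v from fun v hv => this ⟨v, hv⟩
  intro v
  induction v using WellFoundedLT.induction with
  | _ v ih =>
    have hv : (v : α) ∈ s.filter (· ≤ (v : α)) := mem_filter.2 ⟨v.2, le_rfl⟩
    have hbelow : ∑ w ∈ (s.filter (· ≤ (v : α))).erase v, f w =
        ∑ w ∈ (s.filter (· ≤ (v : α))).erase v, g w := by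
      refine sum_congr rfl fun w hw => ?_
      obtain ⟨hwv, hw⟩ := mem_erase.1 hw
      obtain ⟨hws, hwle⟩ := mem_filter.1 hw
      exact ih ⟨w, hws⟩ (lt_of_le_of_ne hwle (Subtype.coe_ne_coe.1 hwv))
    have hsum := (hf v v.2).trans (hg v v.2).symm
    rw [← add_sum_erase _ _ hv, ← add_sum_erase _ _ hv, hbelow] at hsum
    exact add_right_cancel hsum

theorem AddChar.sum_comp_linearMap_eq_zero {F V R : Type*} [Field F] [AddCommGroup V]
    [Module F V] [Fintype V] [CommRing R] [IsDomain R] {ψ : AddChar F R} (hψ : ψ ≠ 1)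
    {ℓ : V →ₗ[F] F} (hℓ : ℓ ≠ 0) : ∑ v, ψ (ℓ v) = 0 := by
  refine sum_eq_zero_of_ne_one (ψ := ψ.compAddMonoidHom ℓ.toAddMonoidHom) ?_
  obtain ⟨a, ha⟩ := ne_one_iff.1 hψ
  obtain ⟨v, rfl⟩ := LinearMap.surjective_of_ne_zero hℓ a
  exact ne_one_iff.2 ⟨v, ha⟩

theorem AddChar.sum_filter_mem_comp_linearMap_eq_zero {F M R : Type*} [Field F]
    [AddCommGroup M] [Module F M] [Fintype M] [CommRing R] [IsDomain R] {ψ : AddChar F R}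
    (hψ : ψ ≠ 1) (ℓ : M →ₗ[F] F) {V : Submodule F M} [DecidablePred (· ∈ V)]
    (hV : ∃ x ∈ V, ℓ x ≠ 0) : ∑ x with x ∈ V, ψ (ℓ x) = 0 := by
  rw [sum_subtype _ (fun x => by rw [mem_filter, and_iff_right (mem_univ x)])]
  refine sum_comp_linearMap_eq_zero hψ (ℓ := ℓ.domRestrict V) fun h => ?_
  obtain ⟨x, hx, hℓx⟩ := hV
  exact hℓx (LinearMap.congr_fun h ⟨x, hx⟩)

namespace Submodule

variable {R M ι : Type*} [Semiring R] [AddCommMonoid M] [Module R M] {H : ι → Submodule R M}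

def flat (H : ι → Submodule R M) (x : M) : Submodule R M := ⨅ (i) (_ : x ∈ H i), H i

theorem mem_flat (x : M) : x ∈ flat H x := by
  simp only [flat, mem_iInf]
  exact fun _ hi => hi

theorem flat_le_iInf_iff {p : ι → Prop} {x : M} :
    flat H x ≤ ⨅ (i) (_ : p i), H i ↔ x ∈ ⨅ (i) (_ : p i), H i :=
  ⟨fun h => h (mem_flat x), fun h => le_iInf₂ fun i hi => iInf₂_le i (by simp_all [mem_iInf])⟩

theorem flat_le_iff {i : ι} {x : M} : flat H x ≤ H i ↔ x ∈ H i := by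
  simpa using flat_le_iInf_iff (H := H) (p := (· = i)) (x := x)

section

variable {L : Finset (Submodule R M)}
  (hL : ∀ V, V ∈ L ↔ ∃ S : Finset ι, V = ⨅ i ∈ S, H i)
include hL

theorem flat_mem [Fintype ι] (x : M) : flat H x ∈ L := by
  classical
  exact (hL _).2 ⟨univ.filter (x ∈ H ·), by simp [flat]⟩

theorem flat_le_iff_mem {V : Submodule R M} (hV : V ∈ L) {x : M} : flat H x ≤ V ↔ x ∈ V := by
  obtain ⟨S, rfl⟩ := (hL V).1 hV
  exact flat_le_iInf_iff

theorem sum_filter_le_sum_fiber_flat [Fintype ι] [Fintype M] [DecidableEq (Submodule R M)]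
    [DecidableLE (Submodule R M)] {β : Type*} [AddCommMonoid β] {V : Submodule R M}
    [DecidablePred (· ∈ V)] (hV : V ∈ L) (g : M → β) :
    ∑ W ∈ L with W ≤ V, ∑ x with flat H x = W, g x = ∑ x with x ∈ V, g x := by
  rw [sum_fiberwise_eq_sum_filter]
  refine sum_congr (filter_congr fun x _ => ?_) fun _ _ => rfl
  rw [mem_filter, flat_le_iff_mem hL hV, and_iff_right (flat_mem hL x)]

end

end Submodule

open scoped Classical in
theorem fourier_sum_eq_mobius_sum_general
    (F : Type*) [Field F] [Fintype F]
    (d n : ℕ)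
    (H : Fin n → Submodule F (Fin d → F))
    (LA : Finset (Submodule F (Fin d → F)))
    (hLA : ∀ V : Submodule F (Fin d → F),
      V ∈ LA ↔ ∃ S : Finset (Fin n), V = ⨅ i ∈ S, H i)
    (ψ : AddChar F ℂ) (hψ : ψ ≠ 1) (ξ : Fin d → F)
    (hgen : ∀ V ∈ LA, V ≠ ⊥ → ∃ X ∈ V, ∑ j : Fin d, X j * ξ j ≠ 0)
    (m : Submodule F (Fin d → F) → ℂ)
    (hm : ∀ V ∈ LA, ∑ W ∈ LA.filter (fun W => W ≤ V), m W =
      if V = ⊥ then 1 else 0) :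
    ∑ X : Fin d → F,
        (Fintype.card F : ℂ) ^ (Finset.univ.filter fun i : Fin n => X ∈ H i).card *
          ψ (∑ j : Fin d, X j * ξ j) =
      ∑ V ∈ LA, m V *
        (Fintype.card F : ℂ) ^ (Finset.univ.filter fun i : Fin n => V ≤ H i).card := by
  set ℓ : (Fin d → F) →ₗ[F] F := (dotProductBilin F F).flip ξ
  have hℓ (X : Fin d → F) : ∑ j, X j * ξ j = ℓ X := rfl
  simp only [hℓ] at hgen ⊢
  have hchar : ∀ V ∈ LA, ∑ X with X ∈ V, ψ (ℓ X) = if V = ⊥ then 1 else 0 := by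
    intro V hV
    split_ifs with hbot
    · subst hbot
      simp [Submodule.mem_bot, filter_eq']
    · exact AddChar.sum_filter_mem_comp_linearMap_eq_zero hψ ℓ (hgen V hV hbot)
  have hfiber : ∀ V ∈ LA, ∑ X with Submodule.flat H X = V, ψ (ℓ X) = m V :=
    eqOn_of_sum_filter_le_eq (fun V hV => (Submodule.sum_filter_le_sum_fiber_flat hLA hV _).trans
      (hchar V hV)) hm
  calc _ = ∑ V ∈ LA, ∑ X with Submodule.flat H X = V,
        (Fintype.card F : ℂ) ^ #{i | Submodule.flat H X ≤ H i} * ψ (ℓ X) := by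
        simp only [Submodule.flat_le_iff]
        exact (sum_fiberwise_of_maps_to (fun X _ => Submodule.flat_mem hLA X) _).symm
    _ = _ := sum_congr rfl fun V hV => by
        rw [sum_congr rfl fun X hX => by rw [(mem_filter.1 hX).2], ← mul_sum, hfiber V hV,
          mul_comm]

open scoped Classical in
/-- Let `a_1, …, a_n` be nonzero vectors spanning `F_q^d` with associated
hyperplanes `H_i = {X : X ⬝ a_i = 0}`, let `LA` be the intersection lattice of the
arrangement (all intersections of subfamilies, including the empty intersection `⊤`,
ordered by inclusion, with least element `⊥ = {0}`), let `ψ` be a nontrivial additive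
character and let `ξ` be generic (nonzero on every nonzero member of `LA`).  If `m` is
the Möbius function `V ↦ μ({0}, V)` of `LA` — characterised by
`∑_{W ∈ LA, W ⊆ V} m(W) = δ_{V,{0}}` — then
`∑_{X ∈ F_q^d} q^{ca(X)} ψ(X ⬝ ξ) = ∑_{V ∈ LA} m(V) q^{ca(V)}`. -/
theorem fourier_sum_eq_mobius_sum
    (F : Type*) [Field F] [Fintype F]
    (d n : ℕ) (a : Fin n → Fin d → F)
    (ha : ∀ i, a i ≠ 0)
    (hspan : Submodule.span F (Set.range a) = ⊤)
    (H : Fin n → Submodule F (Fin d → F))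
    (hH : ∀ i, H i =
      LinearMap.ker (∑ j : Fin d, a i j • LinearMap.proj j : (Fin d → F) →ₗ[F] F))
    (LA : Finset (Submodule F (Fin d → F)))
    (hLA : ∀ V : Submodule F (Fin d → F),
      V ∈ LA ↔ ∃ S : Finset (Fin n), V = ⨅ i ∈ S, H i)
    (ψ : AddChar F ℂ) (hψ : ψ ≠ 1) (ξ : Fin d → F)
    (hgen : ∀ V ∈ LA, V ≠ ⊥ → ∃ X ∈ V, ∑ j : Fin d, X j * ξ j ≠ 0)
    (m : Submodule F (Fin d → F) → ℂ)
    (hm : ∀ V ∈ LA, ∑ W ∈ LA.filter (fun W => W ≤ V), m W =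
      if V = ⊥ then 1 else 0) :
    ∑ X : Fin d → F,
        (Fintype.card F : ℂ) ^ (Finset.univ.filter fun i : Fin n => X ∈ H i).card *
          ψ (∑ j : Fin d, X j * ξ j) =
      ∑ V ∈ LA, m V *
        (Fintype.card F : ℂ) ^ (Finset.univ.filter fun i : Fin n => V ≤ H i).card :=
  fourier_sum_eq_mobius_sum_general F d n H LA hLA ψ hψ ξ hgen m hm
end

section
/- Let a_1, …, a_n be nonzero vectors spanning F_q^d, let H_i = { X ∈ F_q^d : X · a_i = 0 }, and let L(A) be the intersection lattice of the H_i (all intersections of subfamilies, including F_q^d), ordered by inclusion, with least element {0}. Suppose ξ ∈ F_q^d is generic, i.e. for every V ∈ L(A) with V ≠ {0} there exists X ∈ V with X · ξ ≠ 0. Then the number of pairs (v, w) ∈ F_q^n × F_q^n satisfying Σ_{i=1}^n v_i w_i a_i = ξ equals q^{n−d} Σ_{V ∈ L(A)} μ({0}, V) · q^{ca(V)}, where ca(V) = #{ i : V ⊆ H_i } and μ is the Möbius function of L(A). -/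
open scoped BigOperators

section Aux

variable {F : Type*} [Field F] [Fintype F] {d n : ℕ}

/-- If the common kernel of the functionals `X ↦ ∑ j, a i j * X j`, `i ∈ S`, is trivial,
then the `a i`, `i ∈ S`, span. -/
lemma aux_span_top (a : Fin n → Fin d → F) (S : Set (Fin n))
    (h : ∀ X : Fin d → F, (∀ i ∈ S, ∑ j, a i j * X j = 0) → X = 0) :
    Submodule.span F (a '' S) = ⊤ := by
  by_contra hne
  obtain ⟨f, hf0, hfmap⟩ :=
    Submodule.exists_dual_map_eq_bot_of_lt_top (lt_top_iff_ne_top.2 hne)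
      inferInstance
  classical
  set X : Fin d → F := fun j => f (Pi.single j 1) with hX
  have hfY : ∀ Y : Fin d → F, f Y = ∑ j, Y j * X j := by
    intro Y
    have hYe : Y = ∑ j, Y j • (Pi.single j 1 : Fin d → F) := by
      ext k; simp [Pi.single_apply]
    calc f Y = f (∑ j, Y j • (Pi.single j 1 : Fin d → F)) := by rw [← hYe]
      _ = ∑ j, Y j * X j := by rw [map_sum]; simp [hX, smul_eq_mul]
  have hXz : X = 0 := by
    apply h
    intro i hi
    have : f (a i) = 0 := by
      have : f (a i) ∈ Submodule.map f (Submodule.span F (a '' S)) :=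
        Submodule.mem_map_of_mem (Submodule.subset_span ⟨i, hi, rfl⟩)
      rw [hfmap] at this
      exact (Submodule.mem_bot F).1 this
    rw [hfY] at this
    exact this
  apply hf0
  apply LinearMap.ext; intro Y
  rw [hfY, hXz]
  simp

/-- Fibre of a surjective linear map `F^n → F^d` has `q^(n-d)` points. -/
lemma aux_fiber_card (f : (Fin n → F) →ₗ[F] (Fin d → F))
    (hf : LinearMap.range f = ⊤) (ξ : Fin d → F) :
    Nat.card {w : Fin n → F // f w = ξ} = Fintype.card F ^ (n - d) := by
  classical
  obtain ⟨w₀, hw₀⟩ : ∃ w, f w = ξ := by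
    have : ξ ∈ LinearMap.range f := by rw [hf]; trivial
    exact this
  have e : LinearMap.ker f ≃ {w : Fin n → F // f w = ξ} :=
    { toFun := fun x => ⟨w₀ + x.1, by
        have hx := x.2
        rw [LinearMap.mem_ker] at hx
        simp [map_add, hx, hw₀]⟩
      invFun := fun w => ⟨w.1 - w₀, by
        rw [LinearMap.mem_ker, map_sub, w.2, hw₀, sub_self]⟩
      left_inv := fun x => by ext1; simp
      right_inv := fun w => by ext1; simp }
  rw [← Nat.card_congr e, Nat.card_eq_fintype_card, Module.card_eq_pow_finrank (K := F)]
  congr 1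
  have h1 := LinearMap.finrank_range_add_finrank_ker f
  rw [hf, finrank_top, Module.finrank_fin_fun, Module.finrank_fin_fun] at h1
  omega

/-- Number of vectors with prescribed support. -/
lemma aux_support_card (S : Finset (Fin n)) :
    Nat.card {v : Fin n → F // ∀ i, v i ≠ 0 ↔ i ∈ S} =
      (Fintype.card F - 1) ^ S.card := by
  classical
  have e : {v : Fin n → F // ∀ i, v i ≠ 0 ↔ i ∈ S} ≃ (S → {x : F // x ≠ 0}) :=
    { toFun := fun v i => ⟨v.1 i.1, (v.2 i.1).2 i.2⟩
      invFun := fun g => ⟨fun i => if h : i ∈ S then (g ⟨i, h⟩).1 else 0, by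
        intro i
        constructor
        · intro hi
          by_contra hiS
          simp [hiS] at hi
        · intro hi
          simpa [hi] using (g ⟨i, hi⟩).2⟩
      left_inv := fun v => by
        ext i
        dsimp only
        by_cases h : i ∈ S
        · simp [h]
        · simp only [dif_neg h]
          by_contra hne
          exact h ((v.2 i).1 (Ne.symm hne))
      right_inv := fun g => by
        ext i
        simp [i.2] }
  rw [Nat.card_congr e, Nat.card_eq_fintype_card, Fintype.card_fun]
  congr 1
  · have : Fintype.card {x : F // x ≠ 0} = Fintype.card F - 1 := Set.card_ne_eq (0 : F)
    exact this
  · simp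

end Aux

open scoped Classical in
/-- With `a_1, …, a_n` nonzero vectors spanning `F_q^d`, hyperplanes
`H_i`, intersection lattice `LA` (with least element `⊥ = {0}`), Möbius function
`m = μ({0}, ·)` of `LA`, and a generic `ξ ∈ F_q^d`, the number of pairs
`(v,w) ∈ F_q^n × F_q^n` solving the moment map equation `∑ i, v_i w_i a_i = ξ` equals
`q^{n-d} ∑_{V ∈ LA} μ({0},V) q^{ca(V)}`. -/
theorem card_toric_moment_fiber_eq_mobius_sum
    (F : Type*) [Field F] [Fintype F]
    (d n : ℕ) (a : Fin n → Fin d → F)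
    (ha : ∀ i, a i ≠ 0)
    (hspan : Submodule.span F (Set.range a) = ⊤)
    (H : Fin n → Submodule F (Fin d → F))
    (hH : ∀ i, H i =
      LinearMap.ker (∑ j : Fin d, a i j • LinearMap.proj j : (Fin d → F) →ₗ[F] F))
    (LA : Finset (Submodule F (Fin d → F)))
    (hLA : ∀ V : Submodule F (Fin d → F),
      V ∈ LA ↔ ∃ S : Finset (Fin n), V = ⨅ i ∈ S, H i)
    (ξ : Fin d → F)
    (hgen : ∀ V ∈ LA, V ≠ ⊥ → ∃ X ∈ V, ∑ j : Fin d, X j * ξ j ≠ 0)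
    (m : Submodule F (Fin d → F) → ℂ)
    (hm : ∀ V ∈ LA, ∑ W ∈ LA.filter (fun W => W ≤ V), m W =
      if V = ⊥ then 1 else 0) :
    (Nat.card {p : (Fin n → F) × (Fin n → F) //
        ∑ i : Fin n, (p.1 i * p.2 i) • a i = ξ} : ℂ) =
      (Fintype.card F : ℂ) ^ ((n : ℤ) - (d : ℤ)) *
        ∑ V ∈ LA, m V *
          (Fintype.card F : ℂ) ^ (Finset.univ.filter fun i : Fin n => V ≤ H i).card := by
  classical
  set q : ℕ := Fintype.card F with hq
  -- membership in H i
  have hHm : ∀ (i : Fin n) (X : Fin d → F), X ∈ H i ↔ ∑ j, a i j * X j = 0 := by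
    intro i X
    rw [hH i]
    simp [LinearMap.mem_ker, LinearMap.sum_apply, smul_eq_mul]
  -- the infimum submodules
  set Vs : Finset (Fin n) → Submodule F (Fin d → F) := fun S => ⨅ i ∈ S, H i with hVs
  have hVsm : ∀ (S : Finset (Fin n)) (X : Fin d → F), X ∈ Vs S ↔ ∀ i ∈ S, X ∈ H i := by
    intro S X; simp [hVs, Submodule.mem_iInf]
  have hVsLA : ∀ S : Finset (Fin n), Vs S ∈ LA := fun S => (hLA _).2 ⟨S, rfl⟩
  -- d ≤ n
  have hdn : d ≤ n := by
    have h1 : Module.finrank F (Fin d → F) = d := Module.finrank_fin_fun F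
    have h2 := finrank_range_le_card (R := F) a
    rw [Set.finrank, hspan, finrank_top, h1] at h2
    simpa using h2
  -- the linear maps
  set f : (Fin n → F) → ((Fin n → F) →ₗ[F] (Fin d → F)) :=
    fun v => ∑ i, LinearMap.smulRight (v i • (LinearMap.proj i : (Fin n → F) →ₗ[F] F)) (a i)
    with hf
  have hfapp : ∀ v w, f v w = ∑ i, (v i * w i) • a i := by
    intro v w
    simp [hf, LinearMap.sum_apply, smul_eq_mul, LinearMap.smulRight_apply]
  -- support
  set supp : (Fin n → F) → Finset (Fin n) := fun v => Finset.univ.filter (fun i => v i ≠ 0)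
    with hsupp
  -- range of f v
  have hrange : ∀ v, LinearMap.range (f v) = Submodule.span F (a '' ↑(supp v)) := by
    intro v
    apply le_antisymm
    · rintro _ ⟨w, rfl⟩
      rw [hfapp]
      apply Submodule.sum_mem
      intro i _
      by_cases hv : v i = 0
      · simp [hv]
      · exact Submodule.smul_mem _ _
          (Submodule.subset_span ⟨i, by simp [hsupp, hv], rfl⟩)
    · rw [Submodule.span_le]
      rintro _ ⟨i, hi, rfl⟩
      have hvi : v i ≠ 0 := by simpa [hsupp] using hi
      refine ⟨Pi.single i (v i)⁻¹, ?_⟩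
      rw [hfapp]
      rw [Finset.sum_eq_single i]
      · simp [Pi.single_apply, mul_inv_cancel₀ hvi]
      · intro b _ hb
        simp [Pi.single_apply, hb]
      · simp
  -- fibre counts
  have key : ∀ v : Fin n → F,
      Nat.card {w : Fin n → F // f v w = ξ} = if Vs (supp v) = ⊥ then q ^ (n - d) else 0 := by
    intro v
    split_ifs with hbot
    · apply aux_fiber_card
      rw [hrange]
      apply aux_span_top
      intro X hX
      have : X ∈ Vs (supp v) := by
        rw [hVsm]
        intro i hi
        rw [hHm]
        exact hX i hi
      rw [hbot] at this
      simpa using this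
    · -- ξ not in range
      have hxi : ξ ∉ LinearMap.range (f v) := by
        obtain ⟨X, hXV, hXxi⟩ := hgen _ (hVsLA (supp v)) hbot
        rw [hrange]
        intro hmem
        apply hXxi
        -- span (a '' supp v) ≤ ker of dot with X
        have hker : Submodule.span F (a '' ↑(supp v)) ≤
            LinearMap.ker (∑ j : Fin d, X j • (LinearMap.proj j : (Fin d → F) →ₗ[F] F)) := by
          rw [Submodule.span_le]
          rintro _ ⟨i, hi, rfl⟩
          have := (hVsm _ X).1 hXV i hi
          rw [hHm] at this
          simp only [SetLike.mem_coe, LinearMap.mem_ker, LinearMap.sum_apply,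
            LinearMap.smul_apply, LinearMap.proj_apply, smul_eq_mul]
          rw [← this]
          exact Finset.sum_congr rfl fun j _ => mul_comm _ _
        have := hker hmem
        simpa [LinearMap.sum_apply, smul_eq_mul] using this
      rw [Nat.card_eq_zero]
      left
      constructor
      intro w
      exact hxi ⟨w.1, w.2⟩
  -- split the count over v
  have e : {p : (Fin n → F) × (Fin n → F) // ∑ i : Fin n, (p.1 i * p.2 i) • a i = ξ} ≃
      (v : Fin n → F) × {w : Fin n → F // f v w = ξ} :=
    { toFun := fun p => ⟨p.1.1, p.1.2, by rw [hfapp]; exact p.2⟩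
      invFun := fun x => ⟨(x.1, x.2.1), by rw [← hfapp]; exact x.2.2⟩
      left_inv := fun p => rfl
      right_inv := fun x => rfl }
  have hN : Nat.card {p : (Fin n → F) × (Fin n → F) //
      ∑ i : Fin n, (p.1 i * p.2 i) • a i = ξ} =
      ∑ S : Finset (Fin n), (q - 1) ^ S.card * (if Vs S = ⊥ then q ^ (n - d) else 0) := by
    rw [Nat.card_congr e, Nat.card_eq_fintype_card, Fintype.card_sigma]
    have step1 : ∀ v, Fintype.card {w : Fin n → F // f v w = ξ} =
        if Vs (supp v) = ⊥ then q ^ (n - d) else 0 := by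
      intro v; rw [← Nat.card_eq_fintype_card]; exact key v
    simp only [step1]
    rw [← Finset.sum_fiberwise_of_maps_to (fun v _ => Finset.mem_univ (supp v))
      (fun v => if Vs (supp v) = ⊥ then q ^ (n - d) else 0)]
    apply Finset.sum_congr rfl
    intro S _
    rw [Finset.sum_congr rfl (fun v hv => by
      rw [(Finset.mem_filter.1 hv).2])]
    rw [Finset.sum_const, smul_eq_mul]
    congr 1
    -- count of v with supp v = S
    have : (Finset.univ.filter (fun v : Fin n → F => supp v = S)).card =
        Nat.card {v : Fin n → F // ∀ i, v i ≠ 0 ↔ i ∈ S} := by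
      rw [Nat.card_eq_fintype_card, Fintype.card_subtype]
      congr 1
      apply Finset.filter_congr
      intro v _
      constructor
      · intro h i
        rw [← h]
        simp [hsupp]
      · intro h
        ext i
        simp [hsupp, h i]
    rw [this, aux_support_card]
  -- now the RHS
  have hpow : ∀ t : Finset (Fin n), ((q : ℂ)) ^ t.card =
      ∑ S ∈ t.powerset, ((q : ℂ) - 1) ^ S.card := by
    intro t
    have h := Finset.prod_add (fun _ : Fin n => (q : ℂ) - 1) (fun _ => (1 : ℂ)) t
    simp only [sub_add_cancel, Finset.prod_const, Finset.prod_const_one, one_pow, mul_one] at h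
    exact h
  have hsub : ∀ (V : Submodule F (Fin d → F)) (S : Finset (Fin n)),
      S ⊆ Finset.univ.filter (fun i => V ≤ H i) ↔ V ≤ Vs S := by
    intro V S
    rw [hVs]
    simp only [le_iInf_iff]
    constructor
    · intro h i hi
      exact (Finset.mem_filter.1 (h hi)).2
    · intro h i hi
      exact Finset.mem_filter.2 ⟨Finset.mem_univ i, h i hi⟩
  have hRHS : ∑ V ∈ LA, m V * (q : ℂ) ^ (Finset.univ.filter fun i : Fin n => V ≤ H i).card =
      ∑ S : Finset (Fin n), (if Vs S = ⊥ then ((q:ℂ) - 1) ^ S.card else 0) := by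
    calc ∑ V ∈ LA, m V * (q : ℂ) ^ (Finset.univ.filter fun i : Fin n => V ≤ H i).card
        = ∑ V ∈ LA, ∑ S : Finset (Fin n),
            (if V ≤ Vs S then m V * ((q:ℂ) - 1) ^ S.card else 0) := by
          apply Finset.sum_congr rfl
          intro V _
          rw [hpow, Finset.mul_sum]
          rw [← Finset.sum_filter]
          rw [show (Finset.univ.filter fun i : Fin n => V ≤ H i).powerset =
            Finset.univ.filter (fun S : Finset (Fin n) => V ≤ Vs S) from ?_]
          · ext S
            simp only [Finset.mem_powerset, Finset.mem_filter, Finset.mem_univ, true_and]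
            exact hsub V S
      _ = ∑ S : Finset (Fin n), ∑ V ∈ LA,
            (if V ≤ Vs S then m V * ((q:ℂ) - 1) ^ S.card else 0) := Finset.sum_comm
      _ = ∑ S : Finset (Fin n), (if Vs S = ⊥ then ((q:ℂ) - 1) ^ S.card else 0) := by
          apply Finset.sum_congr rfl
          intro S _
          rw [← Finset.sum_filter, ← Finset.sum_mul, hm _ (hVsLA S)]
          split_ifs <;> simp
  rw [hN, hRHS]
  have hq1 : 1 ≤ q := Fintype.card_pos
  have hzp : (q : ℂ) ^ ((n : ℤ) - (d : ℤ)) = (q : ℂ) ^ (n - d : ℕ) := by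
    rw [show (n : ℤ) - (d : ℤ) = ((n - d : ℕ) : ℤ) by omega, zpow_natCast]
  rw [hzp, Finset.mul_sum]
  push_cast [Nat.cast_sub hq1]
  apply Finset.sum_congr rfl
  intro S _
  split_ifs <;> ring
end
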